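/- Fix an integer k ≥ 1 and let x_k > 0 be the positive solution of x/720 − log(4(x+2k)) = 5. Fix c > 0 and set M = k + 1 + 10·max(x_k, c). Let n > c be an integer, p = c/n, and let H be an (n,k,p) Newman–Watts small world. Then P(there exists a connected set S ⊆ [n], 1 ≤ |S| ≤ n, with e(S,S) > M·max(|S|, log n)) ≤ 1/n³, where e(S,S) denotes the number of edges of H with both endpoints in S. -/

import Mathlib

open scoped Classical

noncomputable section

/-- The `(n,k)`-ring adjacency on `Fin n` (with mod-`n` arithmetic):
`x` and `y` are adjacent iff `(y-x) mod n ∈ {1,…,k}` (equivalently, in `{-k,…,-1}`). -/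
def ringAdj (n k : ℕ) (x y : Fin n) : Prop :=
  x ≠ y ∧ ((y - x).val ≤ k ∨ (x - y).val ≤ k)

/-- The Newman–Watts small world determined by the Bernoulli coordinates `η`:
the `(n,k)`-ring together with all pairs `{x,y}` with `η s(x,y) = true`. -/
def nwGraph (n k : ℕ) (η : Sym2 (Fin n) → Bool) : SimpleGraph (Fin n) where
  Adj x y := x ≠ y ∧ ((y - x).val ≤ k ∨ (x - y).val ≤ k ∨ η s(x, y) = true)
  symm := ⟨by
    rintro x y ⟨hne, h⟩
    refine ⟨hne.symm, ?_⟩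
    rcases h with h | h | h
    · exact Or.inr (Or.inl h)
    · exact Or.inl h
    · exact Or.inr (Or.inr (by rwa [Sym2.eq_swap]))⟩
  loopless := ⟨by rintro x ⟨hne, -⟩; exact hne rfl⟩

/-- Product-Bernoulli(`p`) weight of an outcome `η`. -/
def nwWeight (n : ℕ) (p : ℝ) (η : Sym2 (Fin n) → Bool) : ℝ :=
  ∏ e : Sym2 (Fin n), if η e then p else 1 - p

/-- Probability of an event under the product Bernoulli(`p`) measure. -/
def nwPr (n : ℕ) (p : ℝ) (A : (Sym2 (Fin n) → Bool) → Prop) : ℝ :=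
  ∑ η : Sym2 (Fin n) → Bool, if A η then nwWeight n p η else 0

/-- Expectation under the product Bernoulli(`p`) measure. -/
def nwExp (n : ℕ) (p : ℝ) (X : (Sym2 (Fin n) → Bool) → ℝ) : ℝ :=
  ∑ η : Sym2 (Fin n) → Bool, nwWeight n p η * X η

variable {V : Type*} [Fintype V] [DecidableEq V]

/-- Degree of `v` in `G`. -/
def gdeg (G : SimpleGraph V) (v : V) : ℕ :=
  (Finset.univ.filter fun u => G.Adj v u).card

/-- Number of edges of `G`. -/
def edgeCount (G : SimpleGraph V) : ℕ := (∑ v, gdeg G v) / 2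

/-- `e(S,Sᶜ)`: number of edges with one endpoint in `S`, the other outside. -/
def eCross (G : SimpleGraph V) (S : Finset V) : ℕ :=
  ∑ x ∈ S, ∑ y ∈ Sᶜ, if G.Adj x y then 1 else 0

/-- `e(S) = Σ_{v∈S} deg v`. -/
def eTot (G : SimpleGraph V) (S : Finset V) : ℕ := ∑ x ∈ S, gdeg G x

/-- `e(S,S)`: number of edges with both endpoints in `S`. -/
def eIn (G : SimpleGraph V) (S : Finset V) : ℕ :=
  (∑ x ∈ S, ∑ y ∈ S, if G.Adj x y then 1 else 0) / 2

/-- `S` is connected if the induced subgraph `G[S]` is connected. -/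
def connectedSet (G : SimpleGraph V) (S : Finset V) : Prop :=
  (G.induce (S : Set V)).Connected

/-- One step of the lazy simple random walk applied to a distribution. -/
def lazyStep (G : SimpleGraph V) (μ : V → ℝ) : V → ℝ := fun v =>
  μ v / 2 + ∑ u ∈ Finset.univ.filter (fun u => G.Adj u v), μ u / (2 * gdeg G u)

/-- Distribution of the lazy simple random walk after `t` steps, started at `x`. -/
def walkDist (G : SimpleGraph V) (x : V) : ℕ → V → ℝ
  | 0 => fun v => if v = x then 1 else 0
  | (t + 1) => lazyStep G (walkDist G x t)

/-- Stationary distribution `π(v) = deg v / (2|E|)`. -/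
def statDist (G : SimpleGraph V) (v : V) : ℝ := gdeg G v / (2 * edgeCount G)

/-- Total variation distance. -/
def tvDist (μ ν : V → ℝ) : ℝ := (∑ v, |μ v - ν v|) / 2

/-- Mixing time `max_x min {t : ‖μ_{t,x} − π‖_TV ≤ 1/4}`. -/
def mixingTime (G : SimpleGraph V) : ℕ :=
  Finset.univ.sup fun x => sInf {t : ℕ | tvDist (walkDist G x t) (statDist G) ≤ 1 / 4}

/-! A union bound over all vertex sets suffices. Every vertex has at most `2k` ring neighbours,
so `e(S,S) ≤ k|S| + t(S)`, where `t(S)` counts the pairs inside `S` whose coordinate of `η` is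
`true`. If `e(S,S) > M·max(|S|, log n)`, enlarging `S` to size `max(|S|, ⌈log n⌉)` gives a set
`T` with `|T| ≥ log n` and `t(T) ≥ 5X|T|`, where `X = max(x_k, c) ≥ 2`. For a fixed `T` of size
`j` this has probability at most `C(j², m) pᵐ` with `m = ⌈5Xj⌉`; by `C(N, a) ≤ (eN/a)ᵃ` and
`c ≤ X`, the expected number of such `T` is at most `eʲ (e/5)ᵐ ≤ 2⁻ʲ n⁻³`, and summing over `j`
gives `1/n³`. -/

section ProductBernoulli

open Finset

variable {n : ℕ} {p : ℝ}

lemma nwWeight_nonneg (hp0 : 0 ≤ p) (hp1 : p ≤ 1) (η : Sym2 (Fin n) → Bool) :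
    0 ≤ nwWeight n p η :=
  prod_nonneg fun e _ => by split <;> linarith

lemma nwPr_mono (hp0 : 0 ≤ p) (hp1 : p ≤ 1) {A B : (Sym2 (Fin n) → Bool) → Prop}
    (h : ∀ η, A η → B η) : nwPr n p A ≤ nwPr n p B := by
  refine sum_le_sum fun η _ => ?_
  split_ifs with hA hB hB
  · exact le_rfl
  · exact absurd (h η hA) hB
  · exact nwWeight_nonneg hp0 hp1 η
  · exact le_rfl

lemma nwPr_exists_le_sum (hp0 : 0 ≤ p) (hp1 : p ≤ 1) {ι : Type*} (I : Finset ι)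
    (A : ι → (Sym2 (Fin n) → Bool) → Prop) :
    nwPr n p (fun η => ∃ i ∈ I, A i η) ≤ ∑ i ∈ I, nwPr n p (A i) := by
  simp only [nwPr]
  rw [sum_comm]
  refine sum_le_sum fun η _ => ?_
  have hterm : ∀ i ∈ I, 0 ≤ if A i η then nwWeight n p η else 0 :=
    fun i _ => ite_nonneg (nwWeight_nonneg hp0 hp1 η) le_rfl
  split_ifs with h
  · obtain ⟨i, hi, hAi⟩ := h
    calc nwWeight n p η = if A i η then nwWeight n p η else 0 := (if_pos hAi).symm
      _ ≤ _ := single_le_sum hterm hi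
  · exact sum_nonneg hterm

lemma nwPr_forall_mem_eq_pow (F : Finset (Sym2 (Fin n))) :
    nwPr n p (fun η => ∀ e ∈ F, η e = true) = p ^ #F := by
  let g : Sym2 (Fin n) → Bool → ℝ := fun e b => if b then p else if e ∈ F then 0 else 1 - p
  calc nwPr n p (fun η => ∀ e ∈ F, η e = true)
      = ∑ η : Sym2 (Fin n) → Bool, ∏ e, g e (η e) := by
        refine sum_congr rfl fun η _ => ?_
        split_ifs with h
        · refine prod_congr rfl fun e _ => ?_
          by_cases heF : e ∈ F
          · simp [g, h e heF]
          · cases η e <;> simp [g, heF]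
        · push Not at h
          obtain ⟨e, he, hηe⟩ := h
          exact (prod_eq_zero (mem_univ e) (by simp [g, he, hηe])).symm
    _ = ∏ e, if e ∈ F then p else 1 := by
        rw [← Fintype.prod_sum]
        exact prod_congr rfl fun e _ => by by_cases he : e ∈ F <;> simp [g, he]
    _ = p ^ #F := by rw [prod_ite_mem, univ_inter, prod_const]

lemma nwPr_many_true_le (hp0 : 0 ≤ p) (hp1 : p ≤ 1) (P : Finset (Sym2 (Fin n))) (m : ℕ) :
    nwPr n p (fun η => m ≤ #{e ∈ P | η e = true}) ≤ (#P).choose m * p ^ m := by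
  calc _ ≤ nwPr n p (fun η => ∃ F ∈ P.powersetCard m, ∀ e ∈ F, η e = true) := by
        refine nwPr_mono hp0 hp1 fun η h => ?_
        obtain ⟨F, hF, hcard⟩ := exists_subset_card_eq h
        exact ⟨F, mem_powersetCard.2 ⟨hF.trans (filter_subset _ _), hcard⟩,
          fun e he => (mem_filter.1 (hF he)).2⟩
    _ ≤ ∑ F ∈ P.powersetCard m, nwPr n p (fun η => ∀ e ∈ F, η e = true) :=
        nwPr_exists_le_sum hp0 hp1 _ _
    _ = (#P).choose m * p ^ m := by
        rw [sum_congr rfl fun F hF => by rw [nwPr_forall_mem_eq_pow, (mem_powersetCard.1 hF).2],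
          sum_const, card_powersetCard, nsmul_eq_mul]

end ProductBernoulli

section Counting

open Finset

variable {α : Type*} [DecidableEq α]

def openPairs (S : Finset α) (η : Sym2 α → Bool) : Finset (Sym2 α) :=
  {e ∈ {e ∈ S.sym2 | ¬e.IsDiag} | η e = true}

lemma openPairs_mono {S T : Finset α} (h : S ⊆ T) (η : Sym2 α → Bool) :
    openPairs S η ⊆ openPairs T η :=
  filter_subset_filter _ (filter_subset_filter _ (sym2_mono h))

lemma card_filter_not_isDiag_sym2_le (S : Finset α) :
    #{e ∈ S.sym2 | ¬e.IsDiag} ≤ #S ^ 2 :=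
  calc #{e ∈ S.sym2 | ¬e.IsDiag} ≤ #S.sym2 := card_filter_le _ _
    _ ≤ #(S ×ˢ S) := by rw [sym2_eq_image]; exact card_image_le
    _ = #S ^ 2 := by rw [card_product, sq]

lemma sum_card_filter_open_le (S : Finset α) (η : Sym2 α → Bool) :
    ∑ x ∈ S, #{y ∈ S | x ≠ y ∧ η s(x, y) = true} ≤ 2 * #(openPairs S η) := by
  let Q := {z ∈ S ×ˢ S | z.1 ≠ z.2 ∧ η s(z.1, z.2) = true}
  have hQ : ∑ x ∈ S, #{y ∈ S | x ≠ y ∧ η s(x, y) = true} = #Q := by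
    simp only [Q, card_filter, sum_product]
  have himage : (Q.image fun z => s(z.1, z.2)) ⊆ openPairs S η := by
    intro e he
    obtain ⟨⟨x, y⟩, hxy, rfl⟩ := mem_image.1 he
    simp only [Q, mem_filter, mem_product] at hxy
    obtain ⟨⟨hx, hy⟩, hxy, hη⟩ := hxy
    exact mem_filter.2 ⟨mem_filter.2 ⟨mk_mem_sym2_iff.2 ⟨hx, hy⟩, by simpa using hxy⟩, hη⟩
  have hfiber : ∀ e ∈ (Q.image fun z => s(z.1, z.2)), #{z ∈ Q | s(z.1, z.2) = e} ≤ 2 := by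
    intro e he
    obtain ⟨⟨x, y⟩, -, rfl⟩ := mem_image.1 he
    calc #{z ∈ Q | s(z.1, z.2) = s(x, y)} ≤ #{(x, y), (y, x)} := by
          refine card_le_card fun z hz => ?_
          obtain ⟨a, b⟩ := z
          rcases Sym2.eq_iff.1 (mem_filter.1 hz).2 with ⟨rfl, rfl⟩ | ⟨rfl, rfl⟩ <;> simp
      _ ≤ 2 := card_le_two
  rw [hQ]
  exact (card_le_mul_card_image Q 2 hfiber).trans (Nat.mul_le_mul_left 2 (card_le_card himage))

lemma card_filter_val_le_of_injective {n : ℕ} [NeZero n] {f : Fin n → Fin n} (hf : f.Injective)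
    (k : ℕ) :
    #{y | f y ≠ 0 ∧ (f y).val ≤ k} ≤ k := by
  simpa using card_le_card_of_injOn (fun y => (f y).val) (t := Icc 1 k)
    (fun y hy => by simpa [Nat.one_le_iff_ne_zero, Fin.val_ne_zero_iff] using hy)
    (fun y _ z _ h => hf (Fin.val_injective h))

lemma card_ringAdj_le (n k : ℕ) (x : Fin n) : #{y | ringAdj n k x y} ≤ 2 * k := by
  have : NeZero n := ⟨x.pos.ne'⟩
  calc #{y | ringAdj n k x y}
      ≤ #(({y | y - x ≠ 0 ∧ (y - x).val ≤ k} : Finset (Fin n)) ∪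
          ({y | x - y ≠ 0 ∧ (x - y).val ≤ k} : Finset (Fin n))) := by
        refine card_le_card fun y hy => ?_
        obtain ⟨hxy, hy | hy⟩ := (mem_filter.1 hy).2
        · exact mem_union_left _ (by simp [sub_ne_zero, hxy.symm, hy])
        · exact mem_union_right _ (by simp [sub_ne_zero, hxy, hy])
    _ ≤ k + k := (card_union_le _ _).trans (add_le_add
        (card_filter_val_le_of_injective sub_left_injective k)
        (card_filter_val_le_of_injective sub_right_injective k))
    _ = 2 * k := (two_mul k).symm

lemma eIn_nwGraph_le (n k : ℕ) (η : Sym2 (Fin n) → Bool) (S : Finset (Fin n)) :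
    eIn (nwGraph n k η) S ≤ k * #S + #(openPairs S η) := by
  have hrow : ∀ x ∈ S, ∑ y ∈ S, (if (nwGraph n k η).Adj x y then 1 else 0)
      ≤ 2 * k + #{y ∈ S | x ≠ y ∧ η s(x, y) = true} := by
    intro x _
    rw [← card_filter]
    calc #{y ∈ S | (nwGraph n k η).Adj x y}
        ≤ #(({y | ringAdj n k x y} : Finset (Fin n)) ∪ {y ∈ S | x ≠ y ∧ η s(x, y) = true}) := by
          refine card_le_card fun y hy => ?_
          obtain ⟨hyS, hxy, hadj | hadj | hadj⟩ := mem_filter.1 hy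
          · exact mem_union_left _ (mem_filter.2 ⟨mem_univ y, hxy, by simp [hadj]⟩)
          · exact mem_union_left _ (mem_filter.2 ⟨mem_univ y, hxy, by simp [hadj]⟩)
          · exact mem_union_right _ (by simp [hyS, hxy, hadj])
      _ ≤ 2 * k + #{y ∈ S | x ≠ y ∧ η s(x, y) = true} :=
          (card_union_le _ _).trans (Nat.add_le_add_right (card_ringAdj_le n k x) _)
  have hsum := (sum_le_sum hrow).trans_eq (sum_add_distrib (f := fun _ => 2 * k))
  have hopen := sum_card_filter_open_le S η
  rw [sum_const, smul_eq_mul] at hsum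
  unfold eIn
  have : #S * (2 * k) = 2 * (k * #S) := by ring
  omega

lemma exists_large_set_many_openPairs_of_lt_eIn {n k : ℕ} {X : ℝ} (hX : 0 ≤ X)
    {η : Sym2 (Fin n) → Bool} {S : Finset (Fin n)} (hS : 1 ≤ #S)
    (h : ((k : ℝ) + 1 + 10 * X) * max (#S : ℝ) (Real.log n) < eIn (nwGraph n k η) S) :
    ∃ T : Finset (Fin n), 1 ≤ #T ∧ Real.log n ≤ #T ∧ 5 * X * #T ≤ #(openPairs T η) := by
  set L := max (#S : ℝ) (Real.log n)
  have hSL : (#S : ℝ) ≤ L := le_max_left _ _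
  have hlog : 0 ≤ Real.log n := Real.log_natCast_nonneg n
  have hsize : max #S ⌈Real.log n⌉₊ ≤ #(univ : Finset (Fin n)) := by
    refine max_le (card_le_univ S) (Nat.ceil_le.2 ?_)
    simpa using Real.log_le_self (Nat.cast_nonneg n)
  obtain ⟨T, hST, -, hT⟩ := exists_subsuperset_card_eq (subset_univ S) (le_max_left _ _) hsize
  have hTL : (#T : ℝ) ≤ 2 * L := by
    have hceil : (⌈Real.log n⌉₊ : ℝ) ≤ L + 1 :=
      (Nat.ceil_lt_add_one hlog).le.trans (by linarith [le_max_right (#S : ℝ) (Real.log n)])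
    have h1L : (1 : ℝ) ≤ L := le_trans (by exact_mod_cast hS) hSL
    rw [hT, Nat.cast_max]
    exact max_le (by linarith) (by linarith)
  have hopenS : (1 + 10 * X) * L < #(openPairs S η) := by
    have hE : (eIn (nwGraph n k η) S : ℝ) ≤ k * #S + #(openPairs S η) := by
      exact_mod_cast eIn_nwGraph_le n k η S
    nlinarith [mul_le_mul_of_nonneg_left hSL (Nat.cast_nonneg (α := ℝ) k)]
  have hopenT : (#(openPairs S η) : ℝ) ≤ #(openPairs T η) := by
    exact_mod_cast card_le_card (openPairs_mono hST η)
  refine ⟨T, hT ▸ hS.trans (le_max_left _ _), ?_, ?_⟩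
  · rw [hT, Nat.cast_max]
    exact (Nat.le_ceil _).trans (le_max_right _ _)
  · nlinarith

end Counting

section Estimates

open Real

lemma choose_le_exp_one_mul_div_pow (N a : ℕ) : (N.choose a : ℝ) ≤ (exp 1 * N / a) ^ a := by
  rcases a.eq_zero_or_pos with rfl | ha
  · simp
  have ha' : (0 : ℝ) < a := Nat.cast_pos.2 ha
  calc (N.choose a : ℝ) ≤ (N : ℝ) ^ a / a.factorial := Nat.choose_le_pow_div a N
    _ = (N / a : ℝ) ^ a * ((a : ℝ) ^ a / a.factorial) := by rw [div_pow]; field_simp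
    _ ≤ (N / a : ℝ) ^ a * exp a := by gcongr; exact pow_div_factorial_le_exp _ ha'.le a
    _ = (exp 1 * N / a) ^ a := by rw [← exp_one_pow]; ring

lemma exp_one_div_five_le : exp 1 / 5 ≤ exp (-(1 / 2)) := by
  have h3 : exp 3 < 25 := by
    calc exp 3 = exp 1 ^ 3 := by rw [exp_one_pow]; norm_num
      _ < 2.7182818286 ^ 3 := by gcongr; exact exp_one_lt_d9
      _ < 25 := by norm_num
  have h32 : exp (3 / 2) < 5 := by
    have hsq : exp (3 / 2) * exp (3 / 2) = exp 3 := by rw [← exp_add]; norm_num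
    nlinarith [exp_pos (3 / 2)]
  rw [div_le_iff₀ (by norm_num)]
  calc exp 1 = exp (-(1 / 2)) * exp (3 / 2) := by rw [← exp_add]; norm_num
    _ ≤ exp (-(1 / 2)) * 5 := by gcongr

lemma choose_mul_choose_mul_pow_le {n j m : ℕ} {X c : ℝ} (hc : 0 < c) (hcX : c ≤ X)
    (hj : 1 ≤ j) (hjn : j ≤ n) (hjm : j ≤ m) (hm : 5 * X * j ≤ m) :
    (n.choose j : ℝ) * (j ^ 2).choose m * (c / n) ^ m ≤ exp 1 ^ j * (exp 1 / 5) ^ m := by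
  have hj' : (0 : ℝ) < j := by exact_mod_cast hj
  have hjn' : (j : ℝ) ≤ n := by exact_mod_cast hjn
  have hn' : (0 : ℝ) < n := hj'.trans_le hjn'
  have hX : 0 < X := hc.trans_le hcX
  have hm' : (0 : ℝ) < m := by linarith [mul_pos (mul_pos (by norm_num : (0 : ℝ) < 5) hX) hj']
  calc (n.choose j : ℝ) * (j ^ 2).choose m * (c / n) ^ m
      ≤ (exp 1 * n / j) ^ j * (exp 1 * (j ^ 2 : ℕ) / m) ^ m * (c / n) ^ m := by
        gcongr <;> exact choose_le_exp_one_mul_div_pow _ _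
    _ = exp 1 ^ j * (exp 1 / 5) ^ m * ((j / n) ^ m * (n / j) ^ j)
          * ((5 * X * j / m) ^ m * (c / X) ^ m) := by
        push_cast
        simp only [div_pow, mul_pow]
        field_simp
        ring
    _ ≤ exp 1 ^ j * (exp 1 / 5) ^ m * ((j / n) ^ j * (n / j) ^ j) * 1 := by
        have hjn1 : (j / n : ℝ) ≤ 1 := (div_le_one hn').2 hjn'
        have h1 : (5 * X * j / m) ^ m ≤ 1 := pow_le_one₀ (by positivity) ((div_le_one hm').2 hm)
        have h2 : (c / X) ^ m ≤ 1 := pow_le_one₀ (by positivity) ((div_le_one hX).2 hcX)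
        refine mul_le_mul (mul_le_mul_of_nonneg_left ?_ (by positivity))
          (mul_le_one₀ h1 (by positivity) h2) (by positivity) (by positivity)
        exact mul_le_mul_of_nonneg_right (pow_le_pow_of_le_one (by positivity) hjn1 hjm)
          (by positivity)
    _ = exp 1 ^ j * (exp 1 / 5) ^ m := by
        rw [← mul_pow, div_mul_div_cancel₀ hn'.ne', div_self hj'.ne', one_pow]
        ring

lemma exp_one_pow_mul_pow_le {n j m : ℕ} (hn : 0 < n) (hlog : Real.log n ≤ j)
    (hm : 10 * j ≤ m) : exp 1 ^ j * (exp 1 / 5) ^ m ≤ (1 / 2) ^ j / n ^ 3 := by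
  have hn' : (0 : ℝ) < n := by exact_mod_cast hn
  have hm' : (10 * j : ℝ) ≤ m := by exact_mod_cast hm
  calc exp 1 ^ j * (exp 1 / 5) ^ m ≤ exp 1 ^ j * exp (-(1 / 2)) ^ m := by
        gcongr; exact exp_one_div_five_le
    _ = exp (j - m / 2) := by rw [exp_one_pow, ← exp_nat_mul, ← exp_add]; ring_nf
    _ ≤ exp (-j - Real.log (n ^ 3)) := by
        rw [Real.log_pow]
        exact exp_le_exp.2 (by push_cast; linarith)
    _ = exp (-1) ^ j / n ^ 3 := by
        rw [exp_sub, exp_log (by positivity), ← exp_nat_mul]; ring_nf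
    _ ≤ (1 / 2) ^ j / n ^ 3 := by gcongr; exact exp_neg_one_lt_half.le

end Estimates

open Finset in
lemma nwPr_exists_large_set_many_openPairs_le {n : ℕ} {X c : ℝ} (hX : 2 ≤ X) (hc : 0 < c)
    (hcX : c ≤ X) (hn : c < n) :
    nwPr n (c / n) (fun η => ∃ T : Finset (Fin n),
      1 ≤ #T ∧ Real.log n ≤ #T ∧ 5 * X * #T ≤ #(openPairs T η)) ≤ 1 / (n : ℝ) ^ 3 := by
  have hn' : (0 : ℝ) < n := hc.trans hn
  have hp0 : 0 ≤ c / n := by positivity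
  have hp1 : c / n ≤ 1 := (div_le_one hn').2 hn.le
  let J : Finset ℕ := {j ∈ Icc 1 n | Real.log n ≤ j}
  let m : ℕ → ℕ := fun j => ⌈5 * X * j⌉₊
  have hm : ∀ j, 10 * j ≤ m j := fun j => by
    have : (10 * j : ℝ) ≤ 5 * X * j := by nlinarith [(Nat.cast_nonneg j : (0 : ℝ) ≤ j)]
    exact_mod_cast this.trans (Nat.le_ceil _)
  calc _ ≤ nwPr n (c / n) (fun η => ∃ j ∈ J, ∃ T ∈ powersetCard j (univ : Finset (Fin n)),
        m j ≤ #(openPairs T η)) := by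
        refine nwPr_mono hp0 hp1 fun η ⟨T, h1, hlog, hopen⟩ => ?_
        exact ⟨#T, mem_filter.2 ⟨mem_Icc.2 ⟨h1, card_le_univ T |>.trans_eq (Fintype.card_fin n)⟩,
          hlog⟩, T, mem_powersetCard.2 ⟨subset_univ T, rfl⟩, Nat.ceil_le.2 hopen⟩
    _ ≤ ∑ j ∈ J, ∑ T ∈ powersetCard j (univ : Finset (Fin n)),
        nwPr n (c / n) (fun η => m j ≤ #(openPairs T η)) :=
        (nwPr_exists_le_sum hp0 hp1 _ _).trans
          (sum_le_sum fun j _ => nwPr_exists_le_sum hp0 hp1 _ _)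
    _ ≤ ∑ j ∈ J, ∑ T ∈ powersetCard j (univ : Finset (Fin n)),
        ((j ^ 2).choose (m j) * (c / n) ^ m j : ℝ) := by
        refine sum_le_sum fun j _ => sum_le_sum fun T hT => ?_
        refine (nwPr_many_true_le hp0 hp1 _ _).trans ?_
        rw [← (mem_powersetCard.1 hT).2]
        gcongr
        exact card_filter_not_isDiag_sym2_le T
    _ = ∑ j ∈ J, (n.choose j * (j ^ 2).choose (m j) * (c / n) ^ m j : ℝ) := by
        simp only [sum_const, card_powersetCard, card_univ, Fintype.card_fin, nsmul_eq_mul,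
          mul_assoc]
    _ ≤ ∑ j ∈ J, (1 / 2 : ℝ) ^ j / n ^ 3 := by
        refine sum_le_sum fun j hj => ?_
        obtain ⟨hj1n, hlog⟩ := mem_filter.1 hj
        obtain ⟨hj1, hjn⟩ := mem_Icc.1 hj1n
        exact (choose_mul_choose_mul_pow_le hc hcX hj1 hjn (by linarith [hm j])
          (Nat.le_ceil _)).trans (exp_one_pow_mul_pow_le (by omega) hlog (hm j))
    _ ≤ ∑ j ∈ Icc 1 n, (1 / 2 : ℝ) ^ j / n ^ 3 :=
        sum_le_sum_of_subset_of_nonneg (filter_subset _ _) fun _ _ _ => by positivity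
    _ ≤ 1 / n ^ 3 := by
        rw [← sum_div, ← Ico_add_one_right_eq_Icc]
        gcongr
        exact (geom_sum_Ico_le_of_lt_one (by norm_num) (by norm_num)).trans_eq (by norm_num)

/-- **Lemma (internal edges of connected sets).** Fix `k ≥ 1`, let `x_k > 0` solve
`x/720 − log(4(x+2k)) = 5`, fix `c > 0` and set `M = k + 1 + 10·max(x_k, c)`. Let `n > c`,
`p = c/n`, and let `H` be an `(n,k,p)` Newman–Watts small world. Then the probability that some
nonempty connected set `S` has `e(S,S) > M·max(|S|, log n)` is at most `1/n³`. -/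
theorem internal_edges_of_connected_sets (k : ℕ) (hk : 1 ≤ k)
    (xk : ℝ) (hxk : 0 < xk) (hxksol : xk / 720 - Real.log (4 * (xk + 2 * k)) = 5)
    (c : ℝ) (hc : 0 < c) (n : ℕ) (hn : c < n) :
    nwPr n (c / n) (fun η => ∃ S : Finset (Fin n),
      connectedSet (nwGraph n k η) S ∧ 1 ≤ S.card ∧
      ((k : ℝ) + 1 + 10 * max xk c) * max (S.card : ℝ) (Real.log n) <
        (eIn (nwGraph n k η) S : ℝ)) ≤
    1 / (n : ℝ) ^ 3 := by
  have hX : 2 ≤ max xk c := by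
    have hk' : (1 : ℝ) ≤ k := by exact_mod_cast hk
    have hlog : 0 ≤ Real.log (4 * (xk + 2 * k)) := Real.log_nonneg (by linarith)
    exact le_max_of_le_left (by linarith)
  have hn' : (0 : ℝ) < n := hc.trans hn
  refine (nwPr_mono (by positivity) ((div_le_one hn').2 hn.le) ?_).trans
    (nwPr_exists_large_set_many_openPairs_le hX hc (le_max_right _ _) hn)
  rintro η ⟨S, -, hS, h⟩
  exact exists_large_set_many_openPairs_of_lt_eIn (by linarith) hS h

end
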